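/- arXiv:1606.06917 — 2 statements merged into one kernel-verified Lean document; each statement's English description precedes it below -/
import Mathlib

section
/- Let L > M ≥ 0 be integers, η, ξ₊, ξ₋ ∈ ℂ, and let x_1,…,x_L, z_1,…,z_M ∈ ℂ be nonzero with x_1²,…,x_L² pairwise distinct, z_1²,…,z_M² pairwise distinct, and (x_i ± η/2)² ≠ z_k² and (z_k ± η/2)² ≠ x_i² for all i,k. If there exists an integer j with 0 ≤ j ≤ L−M−1 such that ξ₊ + ξ₋ + jη = 0, then A_{{x}}[f_{ξ₊,ξ₋,{z}}] = 0. -/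
open Finset

/-- `A_{{u}}[f]` as a ratio of determinants. -/
noncomputable def Afun {K : ℕ} (η : ℂ) (u : Fin K → ℂ) (f : ℂ → ℂ) : ℂ :=
  Matrix.det (Matrix.of fun i j : Fin K =>
      f (u i) * (u i + η / 2) ^ (2 * (j : ℕ)) + f (-u i) * (u i - η / 2) ^ (2 * (j : ℕ)))
    / Matrix.det (Matrix.of fun i j : Fin K => u i ^ (2 * (j : ℕ)))

/-- `f_{ξ₊,ξ₋,{v}}(λ) = ((λ+ξ₊)(λ+ξ₋)/λ) ∏_m (λ²−v_m²)/((λ+η/2)²−v_m²)`. -/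
noncomputable def fFun (η ξp ξm : ℂ) {M : ℕ} (v : Fin M → ℂ) (lam : ℂ) : ℂ :=
  ((lam + ξp) * (lam + ξm) / lam) *
    ∏ m, ((lam ^ 2 - v m ^ 2) / ((lam + η / 2) ^ 2 - v m ^ 2))

private lemma key1 (j : ℕ) (x a η : ℂ) :
    (x + a) * (x + (-a - (j : ℂ) * η)) *
      ∏ k ∈ range j, ((x + η / 2) ^ 2 - (a + η / 2 + (k : ℂ) * η) ^ 2)
    = ∏ k ∈ range (j + 1), ((x + a + (k : ℂ) * η) * (x - a - (k : ℂ) * η)) := by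
  have hsplit : ∏ k ∈ range j, ((x + η / 2) ^ 2 - (a + η / 2 + (k : ℂ) * η) ^ 2)
      = (∏ k ∈ range j, (x + a + ((k : ℂ) + 1) * η)) * ∏ k ∈ range j, (x - a - (k : ℂ) * η) := by
    rw [← prod_mul_distrib]
    exact prod_congr rfl fun k _ => by ring
  have h1 : ∏ k ∈ range (j + 1), (x + a + (k : ℂ) * η)
      = (∏ k ∈ range j, (x + a + ((k : ℂ) + 1) * η)) * (x + a) := by
    rw [prod_range_succ']
    congr 1
    · exact prod_congr rfl fun k _ => by push_cast; ring
    · push_cast; ring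
  have h2 : ∏ k ∈ range (j + 1), (x - a - (k : ℂ) * η)
      = (∏ k ∈ range j, (x - a - (k : ℂ) * η)) * (x - a - (j : ℂ) * η) :=
    prod_range_succ _ _
  rw [prod_mul_distrib, hsplit, h1, h2]; ring

private lemma key2 (j : ℕ) (x a η : ℂ) :
    (a - x) * ((-a - (j : ℂ) * η) - x) *
      ∏ k ∈ range j, ((x - η / 2) ^ 2 - (a + η / 2 + (k : ℂ) * η) ^ 2)
    = ∏ k ∈ range (j + 1), ((x + a + (k : ℂ) * η) * (x - a - (k : ℂ) * η)) := by
  have hsplit : ∏ k ∈ range j, ((x - η / 2) ^ 2 - (a + η / 2 + (k : ℂ) * η) ^ 2)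
      = (∏ k ∈ range j, (x + a + (k : ℂ) * η)) * ∏ k ∈ range j, (x - a - ((k : ℂ) + 1) * η) := by
    rw [← prod_mul_distrib]
    exact prod_congr rfl fun k _ => by ring
  have h1 : ∏ k ∈ range (j + 1), (x + a + (k : ℂ) * η)
      = (∏ k ∈ range j, (x + a + (k : ℂ) * η)) * (x + a + (j : ℂ) * η) :=
    prod_range_succ _ _
  have h2 : ∏ k ∈ range (j + 1), (x - a - (k : ℂ) * η)
      = (∏ k ∈ range j, (x - a - ((k : ℂ) + 1) * η)) * (x - a) := by
    rw [prod_range_succ']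
    congr 1
    · exact prod_congr rfl fun k _ => by push_cast; ring
    · push_cast; ring
  rw [prod_mul_distrib, hsplit, h1, h2]; ring

open Polynomial in
theorem stmt13 (L M : ℕ) (hML : M < L) (η ξp ξm : ℂ)
    (x : Fin L → ℂ) (z : Fin M → ℂ)
    (hx0 : ∀ i, x i ≠ 0) (hz0 : ∀ k, z k ≠ 0)
    (hx : ∀ i j, i ≠ j → x i ^ 2 ≠ x j ^ 2)
    (hz : ∀ i j, i ≠ j → z i ^ 2 ≠ z j ^ 2)
    (hxz : ∀ i k, (x i + η / 2) ^ 2 ≠ z k ^ 2 ∧ (x i - η / 2) ^ 2 ≠ z k ^ 2)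
    (hzx : ∀ k i, (z k + η / 2) ^ 2 ≠ x i ^ 2 ∧ (z k - η / 2) ^ 2 ≠ x i ^ 2)
    (hroot : ∃ j : ℕ, j ≤ L - M - 1 ∧ ξp + ξm + (j : ℂ) * η = 0) :
    Afun η x (fFun η ξp ξm z) = 0 := by
  obtain ⟨j, hj, hsum⟩ := hroot
  have hMjL : M + j < L := by omega
  set c : ℕ → ℂ := fun k => (ξp + η / 2 + (k : ℂ) * η) ^ 2 with hc
  set P : ℂ[X] := (∏ m : Fin M, (X - C (z m ^ 2))) * ∏ k ∈ range j, (X - C (c k)) with hP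
  have hm1 : (∏ m : Fin M, (X - C (z m ^ 2)) : ℂ[X]).Monic :=
    monic_prod_of_monic _ _ fun _ _ => monic_X_sub_C _
  have hm2 : (∏ k ∈ range j, (X - C (c k)) : ℂ[X]).Monic :=
    monic_prod_of_monic _ _ fun _ _ => monic_X_sub_C _
  have hmonic : P.Monic := hm1.mul hm2
  have hdeg : P.natDegree = M + j := by
    rw [hP, hm1.natDegree_mul hm2, natDegree_prod_of_monic _ _ (fun _ _ => monic_X_sub_C _),
      natDegree_prod_of_monic _ _ (fun _ _ => monic_X_sub_C _)]
    simp only [natDegree_X_sub_C]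
    simp
  have hevalP : ∀ t : ℂ, P.eval t = (∏ m, (t - z m ^ 2)) * ∏ k ∈ range j, (t - c k) := by
    intro t; simp [hP, eval_prod]
  set v : Fin L → ℂ := fun i => P.coeff i with hv
  have hvne : v ≠ 0 := by
    intro h
    have h2 := congrFun h ⟨M + j, hMjL⟩
    have h3 : P.coeff (M + j) = 1 := by rw [← hdeg]; exact hmonic.coeff_natDegree
    simp [hv, h3] at h2
  have hsumeval : ∀ t : ℂ, ∑ i : Fin L, v i * t ^ (i : ℕ) = P.eval t := by
    intro t
    rw [eval_eq_sum_range' (show P.natDegree < L by omega)]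
    rw [← Fin.sum_univ_eq_sum_range (fun i => P.coeff i * t ^ i)]
  set A : Matrix (Fin L) (Fin L) ℂ := Matrix.of fun i jj : Fin L =>
      fFun η ξp ξm z (x i) * (x i + η / 2) ^ (2 * (jj : ℕ)) +
        fFun η ξp ξm z (-x i) * (x i - η / 2) ^ (2 * (jj : ℕ)) with hA
  have hrow : ∀ i, fFun η ξp ξm z (x i) * P.eval ((x i + η / 2) ^ 2) +
      fFun η ξp ξm z (-x i) * P.eval ((x i - η / 2) ^ 2) = 0 := by
    intro i
    set t := x i with ht
    have hxi : t ≠ 0 := hx0 i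
    have hzp : ∀ m, (t + η / 2) ^ 2 - z m ^ 2 ≠ 0 := fun m => sub_ne_zero.2 (hxz i m).1
    have hzm : ∀ m, (t - η / 2) ^ 2 - z m ^ 2 ≠ 0 := fun m => sub_ne_zero.2 (hxz i m).2
    have hcanp : (∏ m, ((t ^ 2 - z m ^ 2) / ((t + η / 2) ^ 2 - z m ^ 2))) *
        (∏ m, ((t + η / 2) ^ 2 - z m ^ 2)) = ∏ m, (t ^ 2 - z m ^ 2) := by
      rw [← prod_mul_distrib]
      exact prod_congr rfl fun m _ => div_mul_cancel₀ _ (hzp m)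
    have hneg : (∏ m, (((-t) ^ 2 - z m ^ 2) / ((-t + η / 2) ^ 2 - z m ^ 2)))
        = ∏ m, ((t ^ 2 - z m ^ 2) / ((t - η / 2) ^ 2 - z m ^ 2)) := by
      refine prod_congr rfl fun m _ => ?_
      rw [show (-t) ^ 2 = t ^ 2 by ring, show (-t + η / 2) ^ 2 = (t - η / 2) ^ 2 by ring]
    have hcanm : (∏ m, ((t ^ 2 - z m ^ 2) / ((t - η / 2) ^ 2 - z m ^ 2))) *
        (∏ m, ((t - η / 2) ^ 2 - z m ^ 2)) = ∏ m, (t ^ 2 - z m ^ 2) := by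
      rw [← prod_mul_distrib]
      exact prod_congr rfl fun m _ => div_mul_cancel₀ _ (hzm m)
    have ep : fFun η ξp ξm z t * P.eval ((t + η / 2) ^ 2)
        = ((t + ξp) * (t + ξm) / t) * (∏ m, (t ^ 2 - z m ^ 2)) *
            ∏ k ∈ range j, ((t + η / 2) ^ 2 - c k) := by
      rw [fFun, hevalP]
      linear_combination (((t + ξp) * (t + ξm) / t) * ∏ k ∈ range j, ((t + η / 2) ^ 2 - c k)) * hcanp
    have em : fFun η ξp ξm z (-t) * P.eval ((t - η / 2) ^ 2)
        = ((-t + ξp) * (-t + ξm) / (-t)) * (∏ m, (t ^ 2 - z m ^ 2)) *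
            ∏ k ∈ range j, ((t - η / 2) ^ 2 - c k) := by
      rw [fFun, hevalP, hneg]
      linear_combination (((-t + ξp) * (-t + ξm) / (-t)) * ∏ k ∈ range j, ((t - η / 2) ^ 2 - c k)) * hcanm
    rw [ep, em]
    have hxm : ξm = -ξp - (j : ℂ) * η := by linear_combination hsum
    have h1 := key1 j t ξp η
    have h2 := key2 j t ξp η
    rw [hxm]
    have hre : ((t + ξp) * (t + (-ξp - (j : ℂ) * η)) / t) * (∏ m, (t ^ 2 - z m ^ 2)) *
          (∏ k ∈ range j, ((t + η / 2) ^ 2 - c k)) +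
        ((-t + ξp) * (-t + (-ξp - (j : ℂ) * η)) / (-t)) * (∏ m, (t ^ 2 - z m ^ 2)) *
          (∏ k ∈ range j, ((t - η / 2) ^ 2 - c k))
        = ((∏ m, (t ^ 2 - z m ^ 2)) / t) *
            ((t + ξp) * (t + (-ξp - (j : ℂ) * η)) *
                (∏ k ∈ range j, ((t + η / 2) ^ 2 - c k)) -
              (ξp - t) * ((-ξp - (j : ℂ) * η) - t) *
                (∏ k ∈ range j, ((t - η / 2) ^ 2 - c k))) := by
      field_simp
      ring
    rw [hre, hc]
    rw [h1, h2, sub_self, mul_zero]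
  have hdet : A.det = 0 := by
    rw [← Matrix.exists_mulVec_eq_zero_iff]
    refine ⟨v, hvne, ?_⟩
    funext i
    have expand : ∀ g t : ℂ, (∑ jj : Fin L, g * t ^ (2 * (jj : ℕ)) * v jj) = g * P.eval (t ^ 2) := by
      intro g t
      rw [← hsumeval (t ^ 2), mul_sum]
      exact sum_congr rfl fun jj _ => by rw [pow_mul]; ring
    have : A.mulVec v i = ∑ jj : Fin L,
        (fFun η ξp ξm z (x i) * (x i + η / 2) ^ (2 * (jj : ℕ)) +
          fFun η ξp ξm z (-x i) * (x i - η / 2) ^ (2 * (jj : ℕ))) * v jj := by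
      simp [Matrix.mulVec, dotProduct, hA]
    rw [this]
    simp only [add_mul, sum_add_distrib, expand]
    simpa using hrow i
  simp only [Afun]
  rw [← hA, hdet, zero_div]
end

section
/- Let L, M ≥ 0 be integers, η ∈ ℂ∖{0}, ξ₊, ξ₋ ∈ ℂ, set s := (ξ₊+ξ₋)/η, and assume neither s nor s + L − M is a nonpositive integer. Let x_1,…,x_L, z_1,…,z_M ∈ ℂ be nonzero with x_1²,…,x_L² pairwise distinct, z_1²,…,z_M² pairwise distinct, and (x_i ± η/2)² ≠ z_k² and (z_k ± η/2)² ≠ x_i² for all i,k. Then A_{{x}}[f_{ξ₊,ξ₋,{z}}] = (−1)^M · (2η)^{L−M} · (Γ(s+L−M)/Γ(s)) · A_{{z}}[f_{−ξ₊+η/2, −ξ₋+η/2, {x}}], where Γ is the complex Gamma function and (2η)^{L−M} is the integer power (possibly negative). -/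
/-!
Expanding both determinants by multilinearity, `A_{u}[f]` becomes a sum over the `2^K` sign
choices `w i = ±u i` of `∏ f(w i) · ∏_{i<j} (w i + w j + η)/(w i + w j)` (`symSum`). For
`M ≤ L` both sides of the identity are then polynomials in `ξ₊` of degree at most `L`, the right
one through the Pochhammer symbol `(s)_{L-M} = Γ(s+L-M)/Γ(s)`. At the `2L` nodes `ξ₊ = ±x_i`
the factor `λ + ξ₊` kills every sign choice but one in the slot of `x_i`, and both sides reduce
to the same identity with `x_i` removed (with `x` and `z` exchanged when `M = L`), so induction
on `L + M` and interpolation prove the case `M ≤ L`. The case `L < M` is the same identity read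
backwards, using the reflection `(1-s)_d = (-1)^d (s-d)_d`.
-/

open Finset

def pm (b : Bool) (c : ℂ) : ℂ := if b then c else -c

@[simp] lemma pm_true (c : ℂ) : pm true c = c := rfl

@[simp] lemma pm_false (c : ℂ) : pm false c = -c := rfl

lemma pm_sq (b : Bool) (c : ℂ) : pm b c ^ 2 = c ^ 2 := by
  cases b <;> simp

lemma pm_not (b : Bool) (c : ℂ) : pm (!b) c = -pm b c := by
  cases b <;> simp

noncomputable def crossFactor {K : ℕ} (η : ℂ) (w : Fin K → ℂ) : ℂ :=
  ∏ i, ∏ j ∈ Ioi i, (w i + w j + η) / (w i + w j)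

noncomputable def symSum {K : ℕ} (η : ℂ) (u : Fin K → ℂ) (f : ℂ → ℂ) : ℂ :=
  ∑ ε : Fin K → Bool, (∏ i, f (pm (ε i) (u i))) * crossFactor η (fun i => pm (ε i) (u i))

lemma Matrix.det_of_sum_rows {n β R : Type*} [Fintype n] [DecidableEq n] [Fintype β]
    [CommRing R] (g : n → β → n → R) :
    (Matrix.of fun i j => ∑ b, g i b j).det
      = ∑ ε : n → β, (Matrix.of fun i j => g i (ε i) j).det := by
  simp only [← Finset.sum_apply]
  exact (Matrix.detRowAlternating (R := R) (n := n)).map_sum g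

lemma det_vandermonde_shift_div {K : ℕ} (η : ℂ) {w : Fin K → ℂ} (hw : Function.Injective w) :
    (Matrix.vandermonde fun i => (w i + η / 2) ^ 2).det / (Matrix.vandermonde fun i => w i ^ 2).det
      = crossFactor η w := by
  rw [Matrix.det_vandermonde, Matrix.det_vandermonde, ← prod_div_distrib, crossFactor]
  refine prod_congr rfl fun i _ => ?_
  rw [← prod_div_distrib]
  refine prod_congr rfl fun j hj => ?_
  have hij : w j - w i ≠ 0 := sub_ne_zero.2 (hw.ne (mem_Ioi.1 hj).ne')
  rw [show (w j + η / 2) ^ 2 - (w i + η / 2) ^ 2 = (w j - w i) * (w i + w j + η) by ring,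
    show w j ^ 2 - w i ^ 2 = (w j - w i) * (w i + w j) by ring, mul_div_mul_left _ _ hij]

lemma injective_pm_of_sq_ne {K : ℕ} {u : Fin K → ℂ} (hu : ∀ i j, i ≠ j → u i ^ 2 ≠ u j ^ 2)
    (ε : Fin K → Bool) : Function.Injective fun i => pm (ε i) (u i) := by
  intro i j hij
  by_contra hne
  exact hu i j hne (by rw [← pm_sq (ε i) (u i), ← pm_sq (ε j) (u j)]; exact congrArg (· ^ 2) hij)

theorem Afun_eq_symSum {K : ℕ} (η : ℂ) {u : Fin K → ℂ} (hu : ∀ i j, i ≠ j → u i ^ 2 ≠ u j ^ 2)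
    (f : ℂ → ℂ) : Afun η u f = symSum η u f := by
  have hnum : (Matrix.of fun i j : Fin K =>
      f (u i) * (u i + η / 2) ^ (2 * (j : ℕ)) + f (-u i) * (u i - η / 2) ^ (2 * (j : ℕ)))
      = Matrix.of fun i (j : Fin K) =>
          ∑ b, f (pm b (u i)) * ((pm b (u i) + η / 2) ^ 2) ^ (j : ℕ) := by
    ext i j
    simp only [Matrix.of_apply, Fintype.sum_bool, pm_true, pm_false]
    rw [show (-u i + η / 2) ^ 2 = (u i - η / 2) ^ 2 by ring, ← pow_mul, ← pow_mul]
  have hden : ∀ ε : Fin K → Bool, (Matrix.of fun i j : Fin K => u i ^ (2 * (j : ℕ)))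
      = Matrix.vandermonde fun i => pm (ε i) (u i) ^ 2 := by
    intro ε
    ext i j
    simp [Matrix.vandermonde, pm_sq, pow_mul]
  rw [Afun, hnum, Matrix.det_of_sum_rows, sum_div, symSum]
  refine sum_congr rfl fun ε _ => ?_
  have hrow := Matrix.det_mul_column (fun i => f (pm (ε i) (u i)))
    (Matrix.vandermonde fun i => (pm (ε i) (u i) + η / 2) ^ 2)
  simp only [Matrix.vandermonde_apply] at hrow
  rw [hrow, hden ε, mul_div_assoc,
    ← det_vandermonde_shift_div η (injective_pm_of_sq_ne hu ε)]

lemma Fin.prod_prod_Ioi_eq_succAbove {M : Type*} [CommMonoid M] {n : ℕ}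
    (F : Fin (n + 1) → Fin (n + 1) → M) (hF : ∀ i j, F i j = F j i) (p : Fin (n + 1)) :
    ∏ i, ∏ j ∈ Ioi i, F i j
      = (∏ k, F p (p.succAbove k)) * ∏ i, ∏ j ∈ Ioi i, F (p.succAbove i) (p.succAbove j) := by
  simp only [← filter_lt_eq_Ioi, prod_filter]
  have hp : ∀ k, (if p < p.succAbove k then F p (p.succAbove k) else 1) *
      (if p.succAbove k < p then F (p.succAbove k) p else 1) = F p (p.succAbove k) := by
    intro k
    rcases (p.succAbove_ne k).lt_or_gt with h | h
    · rw [if_neg h.not_gt, if_pos h, one_mul, hF]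
    · rw [if_pos h, if_neg h.not_gt, mul_one]
  rw [Fin.prod_univ_succAbove _ p, Fin.prod_univ_succAbove _ p, if_neg (lt_irrefl p), one_mul]
  simp only [Fin.prod_univ_succAbove (fun j => if p.succAbove _ < j then _ else _) p,
    Fin.succAbove_lt_succAbove_iff, prod_mul_distrib, ← mul_assoc, ← prod_congr rfl fun k _ => hp k]

lemma crossFactor_succAbove {n : ℕ} (η : ℂ) (w : Fin (n + 1) → ℂ) (p : Fin (n + 1)) :
    crossFactor η w = (∏ k, (w p + w (p.succAbove k) + η) / (w p + w (p.succAbove k)))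
      * crossFactor η (w ∘ p.succAbove) :=
  Fin.prod_prod_Ioi_eq_succAbove (fun i j => (w i + w j + η) / (w i + w j))
    (fun i j => by simp only [add_comm (w i)]) p

theorem symSum_succAbove {n : ℕ} (η : ℂ) (u : Fin (n + 1) → ℂ) (f : ℂ → ℂ) (p : Fin (n + 1)) :
    symSum η u f = ∑ b, f (pm b (u p)) * symSum η (u ∘ p.succAbove)
      (fun w => f w * ((pm b (u p) + w + η) / (pm b (u p) + w))) := by
  rw [symSum, ← (Fin.insertNthEquiv (fun _ => Bool) p).sum_comp, Fintype.sum_prod_type]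
  refine sum_congr rfl fun b _ => ?_
  rw [symSum, mul_sum]
  refine sum_congr rfl fun ε _ => ?_
  have hw : (fun i => pm (Fin.insertNth (α := fun _ => Bool) p b ε i) (u i)) ∘ p.succAbove
      = fun k => pm (ε k) ((u ∘ p.succAbove) k) := by
    ext k; simp
  simp only [Fin.insertNthEquiv_apply]
  rw [Fin.prod_univ_succAbove _ p, crossFactor_succAbove η _ p, hw]
  simp only [Fin.insertNth_apply_same, Fin.insertNth_apply_succAbove, Function.comp_apply,
    prod_mul_distrib]
  ring

lemma symSum_congr {K : ℕ} (η : ℂ) (u : Fin K → ℂ) {f g : ℂ → ℂ}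
    (h : ∀ i b, f (pm b (u i)) = g (pm b (u i))) : symSum η u f = symSum η u g := by
  simp only [symSum, h]

lemma symSum_eq_prod_mul {K : ℕ} (η : ℂ) (u : Fin K → ℂ) {f g : ℂ → ℂ} (c : Fin K → ℂ)
    (h : ∀ i b, f (pm b (u i)) = g (pm b (u i)) * c i) :
    symSum η u f = (∏ i, c i) * symSum η u g := by
  simp only [symSum, h, prod_mul_distrib, mul_sum]
  exact sum_congr rfl fun _ _ => by ring

@[simp] lemma symSum_zero (η : ℂ) (u : Fin 0 → ℂ) (f : ℂ → ℂ) : symSum η u f = 1 := by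
  simp [symSum, crossFactor]

open Polynomial in
lemma exists_natDegree_le_eval_eq_symSum_add_mul {K : ℕ} (η : ℂ) (u : Fin K → ℂ) (g : ℂ → ℂ) :
    ∃ P : ℂ[X], P.natDegree ≤ K ∧ ∀ t, P.eval t = symSum η u fun w => (w + t) * g w := by
  refine ⟨∑ ε : Fin K → Bool, C ((∏ i, g (pm (ε i) (u i))) * crossFactor η fun i => pm (ε i) (u i))
    * ∏ i, (C (pm (ε i) (u i)) + X), ?_, fun t => ?_⟩
  · refine natDegree_sum_le_of_forall_le _ _ fun ε _ => (natDegree_C_mul_le _ _).trans ?_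
    refine (natDegree_prod_le _ _).trans ((sum_le_card_nsmul _ _ 1 fun i _ => ?_).trans (by simp))
    rw [add_comm]
    exact (natDegree_X_add_C _).le
  · simp only [eval_finsetSum, eval_mul, eval_C, eval_prod, eval_add, eval_X, symSum,
      prod_mul_distrib]
    exact sum_congr rfl fun _ _ => by ring

lemma fFun_eq_add_mul (η ξp ξm : ℂ) {M : ℕ} (v : Fin M → ℂ) (w : ℂ) :
    fFun η ξp ξm v w
      = (w + ξp) * ((w + ξm) / w * ∏ m, ((w ^ 2 - v m ^ 2) / ((w + η / 2) ^ 2 - v m ^ 2))) := by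
  rw [fFun]; ring

open Polynomial in
lemma exists_natDegree_le_eval_eq_symSum_fFun {K M : ℕ} (η ξm : ℂ) (u : Fin K → ℂ)
    (v : Fin M → ℂ) :
    ∃ P : ℂ[X], P.natDegree ≤ K ∧ ∀ t, P.eval t = symSum η u (fFun η t ξm v) := by
  obtain ⟨P, hPdeg, hP⟩ := exists_natDegree_le_eval_eq_symSum_add_mul η u
    fun w => (w + ξm) / w * ∏ m, ((w ^ 2 - v m ^ 2) / ((w + η / 2) ^ 2 - v m ^ 2))
  exact ⟨P, hPdeg, fun t => by rw [hP]; congr 1; ext w; rw [fFun_eq_add_mul]⟩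

open Polynomial in
lemma exists_natDegree_le_eval_eq_ascPochhammer_mul {L M : ℕ} (η ξm ξ : ℂ) (x : Fin L → ℂ)
    (z : Fin M → ℂ) (d : ℕ) :
    ∃ Q : ℂ[X], Q.natDegree ≤ d + M ∧ ∀ t, Q.eval t
      = (ascPochhammer ℂ d).eval ((t + ξm) / η) * symSum η z (fFun η (-t + η / 2) ξ x) := by
  obtain ⟨R, hRdeg, hR⟩ := exists_natDegree_le_eval_eq_symSum_fFun η ξ z x
  refine ⟨(ascPochhammer ℂ d).comp (C η⁻¹ * (X + C ξm)) * R.comp (-X + C (η / 2)), ?_,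
    fun t => ?_⟩
  · refine natDegree_mul_le.trans (add_le_add ?_ ?_)
    · have h : (C η⁻¹ * (X + C ξm)).natDegree ≤ 1 :=
        (natDegree_C_mul_le _ _).trans (natDegree_X_add_C _).le
      refine natDegree_comp_le.trans ?_
      rw [ascPochhammer_natDegree]
      exact (Nat.mul_le_mul_left d h).trans (mul_one d).le
    · have h : (-X + C (η / 2)).natDegree ≤ 1 := by
        rw [← sub_eq_neg_add, natDegree_sub_eq_right_of_natDegree_lt] <;> simp
      exact natDegree_comp_le.trans ((Nat.mul_le_mul hRdeg h).trans (mul_one M).le)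
  · simp only [eval_mul, eval_comp, eval_C, eval_add, eval_X, eval_neg, hR, inv_mul_eq_div]

lemma fFun_self (η ξm : ℂ) {M : ℕ} (v : Fin M → ℂ) {c : ℂ} (hc : c ≠ 0) :
    fFun η c ξm v c
      = 2 * (c + ξm) * ∏ m, ((c ^ 2 - v m ^ 2) / ((c + η / 2) ^ 2 - v m ^ 2)) := by
  rw [fFun, show (c + c) * (c + ξm) / c = 2 * (c + ξm) by field_simp; ring]

lemma fFun_neg_self (η ξm : ℂ) {M : ℕ} (v : Fin M → ℂ) (c : ℂ) : fFun η c ξm v (-c) = 0 := by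
  simp [fFun]

lemma fFun_mul_div (η ξm : ℂ) {M : ℕ} (v : Fin M → ℂ) {c w : ℂ} (hw : c + w ≠ 0) :
    fFun η c ξm v w * ((c + w + η) / (c + w)) = fFun η (c + η) ξm v w := by
  simp only [fFun]
  rw [show w + (c + η) = (c + w + η) / (c + w) * (w + c) by field_simp; ring]
  ring

theorem symSum_fFun_of_sq_eq {n M : ℕ} (η ξm : ℂ) (v : Fin M → ℂ) {x : Fin (n + 1) → ℂ}
    {p : Fin (n + 1)} (hx : ∀ j, j ≠ p → x j ^ 2 ≠ x p ^ 2) {c : ℂ} (hc : c ^ 2 = x p ^ 2) :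
    symSum η x (fFun η c ξm v)
      = fFun η c ξm v c * symSum η (x ∘ p.succAbove) (fFun η (c + η) ξm v) := by
  obtain ⟨b, rfl⟩ : ∃ b, pm b (x p) = c := by
    rcases sq_eq_sq_iff_eq_or_eq_neg.1 hc with h | h
    · exact ⟨true, h.symm⟩
    · exact ⟨false, by simp [h]⟩
  have hsum : ∀ F : Bool → ℂ, ∑ b', F b' = F b + F (!b) := by
    intro F; cases b <;> simp [add_comm]
  rw [symSum_succAbove η x _ p, hsum, pm_not, fFun_neg_self, zero_mul, add_zero]
  congr 1
  refine symSum_congr η _ fun j b' => fFun_mul_div η ξm v fun h => ?_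
  refine hx (p.succAbove j) (p.succAbove_ne j) ?_
  rw [← pm_sq b' (x _), ← pm_sq b (x p), ← Function.comp_apply (f := x),
    eq_neg_of_add_eq_zero_right h, neg_sq]

lemma fFun_succAbove {n : ℕ} (η ξ : ℂ) (x : Fin (n + 1) → ℂ) (p : Fin (n + 1)) {c v : ℂ}
    (hc : x p ^ 2 = c ^ 2) (hvc : (v + η / 2) ^ 2 ≠ c ^ 2) (hcv : v ^ 2 ≠ (c + η / 2) ^ 2) :
    fFun η (-c + η / 2) ξ x v
      = fFun η (-c - η / 2) ξ (x ∘ p.succAbove) v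
        * ((c ^ 2 - v ^ 2) / ((c + η / 2) ^ 2 - v ^ 2)) := by
  have key : (v + (-c + η / 2)) * ((v ^ 2 - c ^ 2) / ((v + η / 2) ^ 2 - c ^ 2))
      = (v + (-c - η / 2)) * ((c ^ 2 - v ^ 2) / ((c + η / 2) ^ 2 - v ^ 2)) := by
    rw [mul_div_assoc', mul_div_assoc', div_eq_div_iff (sub_ne_zero.2 hvc)
      (sub_ne_zero.2 hcv.symm)]
    ring
  simp only [fFun, Fin.prod_univ_succAbove _ p, hc, Function.comp_apply]
  linear_combination ((v + ξ) / v * ∏ j : Fin n, (v ^ 2 - x (p.succAbove j) ^ 2) /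
    ((v + η / 2) ^ 2 - x (p.succAbove j) ^ 2)) * key

theorem symSum_fFun_succAbove {n M : ℕ} (η ξ : ℂ) (x : Fin (n + 1) → ℂ) (z : Fin M → ℂ)
    (p : Fin (n + 1)) {c : ℂ} (hc : x p ^ 2 = c ^ 2)
    (hzc : ∀ k, (z k + η / 2) ^ 2 ≠ c ^ 2 ∧ (z k - η / 2) ^ 2 ≠ c ^ 2)
    (hcz : ∀ k, z k ^ 2 ≠ (c + η / 2) ^ 2) :
    symSum η z (fFun η (-c + η / 2) ξ x)
      = (∏ k, ((c ^ 2 - z k ^ 2) / ((c + η / 2) ^ 2 - z k ^ 2)))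
        * symSum η z (fFun η (-c - η / 2) ξ (x ∘ p.succAbove)) := by
  refine symSum_eq_prod_mul η z _ fun k b => ?_
  rw [← pm_sq b (z k)]
  refine fFun_succAbove η ξ x p hc ?_ (by rw [pm_sq]; exact hcz k)
  cases b
  · rw [pm_false, show (-z k + η / 2) ^ 2 = (z k - η / 2) ^ 2 by ring]
    exact (hzc k).2
  · exact (hzc k).1

structure GenericNodes (η : ℂ) {L M : ℕ} (x : Fin L → ℂ) (z : Fin M → ℂ) : Prop where
  x_ne_zero : ∀ i, x i ≠ 0
  z_ne_zero : ∀ k, z k ≠ 0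
  sq_x_ne : ∀ i j, i ≠ j → x i ^ 2 ≠ x j ^ 2
  sq_z_ne : ∀ i j, i ≠ j → z i ^ 2 ≠ z j ^ 2
  x_shift_sq_ne : ∀ i k, (x i + η / 2) ^ 2 ≠ z k ^ 2 ∧ (x i - η / 2) ^ 2 ≠ z k ^ 2
  z_shift_sq_ne : ∀ k i, (z k + η / 2) ^ 2 ≠ x i ^ 2 ∧ (z k - η / 2) ^ 2 ≠ x i ^ 2

namespace GenericNodes

variable {η : ℂ} {L M : ℕ} {x : Fin L → ℂ} {z : Fin M → ℂ}

lemma symm (h : GenericNodes η x z) : GenericNodes η z x :=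
  ⟨h.z_ne_zero, h.x_ne_zero, h.sq_z_ne, h.sq_x_ne, h.z_shift_sq_ne, h.x_shift_sq_ne⟩

lemma comp_succAbove {n : ℕ} {x : Fin (n + 1) → ℂ} (h : GenericNodes η x z) (p : Fin (n + 1)) :
    GenericNodes η (x ∘ p.succAbove) z :=
  ⟨fun _ => h.x_ne_zero _, h.z_ne_zero,
    fun _ _ hij => h.sq_x_ne _ _ (p.succAbove_right_injective.ne hij), h.sq_z_ne,
    fun _ k => h.x_shift_sq_ne _ k, fun k _ => h.z_shift_sq_ne k _⟩

lemma injective_pm (h : GenericNodes η x z) :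
    Function.Injective fun q : Fin L × Bool => pm q.2 (x q.1) := by
  rintro ⟨i, b⟩ ⟨j, b'⟩ hij
  obtain rfl : i = j := by
    by_contra hne
    exact h.sq_x_ne i j hne (by rw [← pm_sq b (x i), ← pm_sq b' (x j)]; exact congrArg (· ^ 2) hij)
  have hx := h.x_ne_zero i
  cases b <;> cases b' <;> simp only [pm_true, pm_false, eq_comm (a := -x i), self_eq_neg] at hij
  all_goals first | rfl | exact absurd hij hx

lemma sq_ne_pm_add_sq (h : GenericNodes η x z) (b : Bool) (i : Fin L) (k : Fin M) :
    z k ^ 2 ≠ (pm b (x i) + η / 2) ^ 2 := by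
  cases b
  · rw [pm_false, show (-x i + η / 2) ^ 2 = (x i - η / 2) ^ 2 by ring]
    exact (h.x_shift_sq_ne i k).2.symm
  · exact (h.x_shift_sq_ne i k).1.symm

end GenericNodes

open Polynomial in
theorem symSum_fFun_eq_of_eq_at_nodes {n M d : ℕ} (hd : d + M ≤ n + 1) {η : ℂ} (ξm ξ K : ℂ)
    {x : Fin (n + 1) → ℂ} {z : Fin M → ℂ} (h : GenericNodes η x z)
    (hnode : ∀ p b, symSum η x (fFun η (pm b (x p)) ξm z)
      = K * (ascPochhammer ℂ d).eval ((pm b (x p) + ξm) / η)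
        * symSum η z (fFun η (-pm b (x p) + η / 2) ξ x))
    (ξp : ℂ) :
    symSum η x (fFun η ξp ξm z)
      = K * (ascPochhammer ℂ d).eval ((ξp + ξm) / η)
        * symSum η z (fFun η (-ξp + η / 2) ξ x) := by
  obtain ⟨P, hPdeg, hP⟩ := exists_natDegree_le_eval_eq_symSum_fFun η ξm x z
  obtain ⟨Q, hQdeg, hQ⟩ := exists_natDegree_le_eval_eq_ascPochhammer_mul η ξm ξ x z d
  suffices hPQ : P = C K * Q by
    rw [← hP, hPQ, eval_mul, eval_C, hQ, mul_assoc]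
  refine eq_of_natDegree_lt_card_of_eval_eq _ _ h.injective_pm (fun ⟨p, b⟩ => ?_) ?_
  · rw [hP, eval_mul, eval_C, hQ, hnode, mul_assoc]
  · have := natDegree_C_mul_le K Q
    simp only [Fintype.card_prod, Fintype.card_fin, Fintype.card_bool]
    omega

open Polynomial in
theorem symSum_fFun_reciprocity {L M : ℕ} (hML : M ≤ L) {η : ℂ} (hη : η ≠ 0) (ξp ξm : ℂ)
    {x : Fin L → ℂ} {z : Fin M → ℂ} (h : GenericNodes η x z) :
    symSum η x (fFun η ξp ξm z)
      = (-1) ^ M * (2 * η) ^ (L - M) * (ascPochhammer ℂ (L - M)).eval ((ξp + ξm) / η)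
        * symSum η z (fFun η (-ξp + η / 2) (-ξm + η / 2) x) := by
  induction hN : L + M using Nat.strong_induction_on generalizing L M ξp ξm with
  | _ N ih =>
  obtain _ | n := L
  · obtain rfl : M = 0 := by omega
    simp
  refine symSum_fFun_eq_of_eq_at_nodes (by omega) ξm _ _ h (fun p b => ?_) ξp
  set c := pm b (x p)
  have hc : c ^ 2 = x p ^ 2 := pm_sq b (x p)
  have hs : 2 * η * ((c + ξm) / η) = 2 * (c + ξm) := by field_simp
  have hzc : ∀ k, (z k + η / 2) ^ 2 ≠ c ^ 2 ∧ (z k - η / 2) ^ 2 ≠ c ^ 2 := fun k => by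
    rw [hc]; exact h.z_shift_sq_ne k p
  rw [symSum_fFun_of_sq_eq η ξm z (fun j hj => h.sq_x_ne j p hj) hc,
    fFun_self η ξm z (by cases b <;> simp [c, h.x_ne_zero p]),
    symSum_fFun_succAbove η _ x z p hc.symm hzc (h.sq_ne_pm_add_sq b p)]
  set ρ := ∏ k, (c ^ 2 - z k ^ 2) / ((c + η / 2) ^ 2 - z k ^ 2)
  rcases Nat.lt_or_ge M (n + 1) with hMn | hMn
  · have IH := ih (n + M) (by omega) (by omega : M ≤ n) (c + η) ξm (h.comp_succAbove p) rfl
    rw [show -(c + η) + η / 2 = -c - η / 2 by ring, show c + η + ξm = c + ξm + η by ring,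
      add_div, div_self hη] at IH
    rw [IH, show n + 1 - M = n - M + 1 by omega, ascPochhammer_succ_left]
    simp only [eval_mul, eval_X, eval_comp, eval_add, eval_one, pow_succ]
    linear_combination (-(-1) ^ M * (2 * η) ^ (n - M) * ρ *
      (ascPochhammer ℂ (n - M)).eval ((c + ξm) / η + 1) *
      symSum η z (fFun η (-c - η / 2) (-ξm + η / 2) (x ∘ p.succAbove))) * hs
  · obtain rfl : M = n + 1 := by omega
    have IH := ih (n + 1 + n) (by omega) (by omega : n ≤ n + 1) (-c - η / 2) (-ξm + η / 2)
      (h.comp_succAbove p).symm rfl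
    rw [show -(-c - η / 2) + η / 2 = c + η by ring, show -(-ξm + η / 2) + η / 2 = ξm by ring,
      show -c - η / 2 + (-ξm + η / 2) = -(c + ξm) by ring, show n + 1 - n = 1 by omega] at IH
    rw [IH, Nat.sub_self]
    simp only [ascPochhammer_one, ascPochhammer_zero, eval_X, eval_one, neg_div, pow_succ,
      pow_zero]
    have hsign : ((-1) ^ n * (-1) ^ n : ℂ) = 1 := by rw [← mul_pow]; norm_num
    linear_combination (-(-1) ^ n * (-1) ^ n * ρ *
      symSum η (x ∘ p.succAbove) (fFun η (c + η) ξm z)) * hs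
      - 2 * (c + ξm) * ρ * symSum η (x ∘ p.succAbove) (fFun η (c + η) ξm z) * hsign

lemma ascPochhammer_eval_one_sub {R : Type*} [CommRing R] (s : R) (d : ℕ) :
    (ascPochhammer R d).eval (1 - s) = (-1) ^ d * (ascPochhammer R d).eval (s - d) := by
  rw [show 1 - s = -(s - 1) by ring, ascPochhammer_eval_neg_eq_descPochhammer,
    descPochhammer_eval_eq_ascPochhammer, sub_sub, add_comm 1, ← sub_sub, sub_add_cancel]

lemma Complex.Gamma_sub_nat_div_Gamma_eq {s : ℂ} {d : ℕ} (hs : ∀ m : ℕ, s - d ≠ -m) :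
    Complex.Gamma (s - d) / Complex.Gamma s = ((ascPochhammer ℂ d).eval (s - d))⁻¹ := by
  rw [← Complex.Gamma_add_nat_div_Gamma_eq _ hs, sub_add_cancel, inv_div]

theorem symSum_fFun_reciprocity_Gamma_of_le {L M : ℕ} (hML : M ≤ L) {η : ℂ} (hη : η ≠ 0)
    {ξp ξm : ℂ} (hs : ∀ m : ℕ, (ξp + ξm) / η ≠ -(m : ℂ))
    {x : Fin L → ℂ} {z : Fin M → ℂ} (h : GenericNodes η x z) :
    symSum η x (fFun η ξp ξm z)
      = (-1 : ℂ) ^ M * (2 * η) ^ ((L : ℤ) - (M : ℤ))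
          * (Complex.Gamma ((ξp + ξm) / η + (L : ℂ) - (M : ℂ)) / Complex.Gamma ((ξp + ξm) / η))
          * symSum η z (fFun η (-ξp + η / 2) (-ξm + η / 2) x) := by
  obtain ⟨d, rfl⟩ : ∃ d, L = M + d := ⟨L - M, by omega⟩
  rw [symSum_fFun_reciprocity hML hη ξp ξm h, Nat.add_sub_cancel_left,
    show ((M + d : ℕ) : ℤ) - M = d by push_cast; ring, zpow_natCast,
    show (ξp + ξm) / η + ((M + d : ℕ) : ℂ) - M = (ξp + ξm) / η + d by push_cast; ring,
    Complex.Gamma_add_nat_div_Gamma_eq _ hs]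

theorem symSum_fFun_reciprocity_Gamma_of_lt {L M : ℕ} (hLM : L < M) {η : ℂ} (hη : η ≠ 0)
    {ξp ξm : ℂ} (hs : ∀ m : ℕ, (ξp + ξm) / η ≠ -(m : ℂ))
    (hs' : ∀ m : ℕ, (ξp + ξm) / η + (L : ℂ) - (M : ℂ) ≠ -(m : ℂ))
    {x : Fin L → ℂ} {z : Fin M → ℂ} (h : GenericNodes η x z) :
    symSum η x (fFun η ξp ξm z)
      = (-1 : ℂ) ^ M * (2 * η) ^ ((L : ℤ) - (M : ℤ))
          * (Complex.Gamma ((ξp + ξm) / η + (L : ℂ) - (M : ℂ)) / Complex.Gamma ((ξp + ξm) / η))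
          * symSum η z (fFun η (-ξp + η / 2) (-ξm + η / 2) x) := by
  obtain ⟨d, rfl⟩ : ∃ d, M = L + d := ⟨M - L, by omega⟩
  set s := (ξp + ξm) / η
  rw [show s + (L : ℂ) - ((L + d : ℕ) : ℂ) = s - d by push_cast; ring] at hs' ⊢
  have hρ : (ascPochhammer ℂ d).eval (s - d) ≠ 0 := by
    rw [← Complex.Gamma_add_nat_div_Gamma_eq _ hs', sub_add_cancel]
    exact div_ne_zero (Complex.Gamma_ne_zero hs) (Complex.Gamma_ne_zero hs')
  have hsign : ((-1) ^ (L + d) * ((-1) ^ L * (-1) ^ d) : ℂ) = 1 := by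
    rw [← pow_add, ← pow_add]
    exact Even.neg_one_pow ⟨L + d, by ring⟩
  rw [symSum_fFun_reciprocity hLM.le hη _ _ h.symm, Nat.add_sub_cancel_left,
    show (-ξp + η / 2 + (-ξm + η / 2)) / η = 1 - s by simp only [s]; field_simp; ring,
    show -(-ξp + η / 2) + η / 2 = ξp by ring, show -(-ξm + η / 2) + η / 2 = ξm by ring,
    show (L : ℤ) - ((L + d : ℕ) : ℤ) = -d by push_cast; ring, zpow_neg, zpow_natCast,
    Complex.Gamma_sub_nat_div_Gamma_eq hs', ascPochhammer_eval_one_sub]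
  field_simp
  linear_combination -symSum η x (fFun η ξp ξm z) * hsign

theorem stmt14 (L M : ℕ) (η : ℂ) (hη : η ≠ 0) (ξp ξm : ℂ)
    (hs : ∀ m : ℕ, (ξp + ξm) / η ≠ -(m : ℂ))
    (hs' : ∀ m : ℕ, (ξp + ξm) / η + (L : ℂ) - (M : ℂ) ≠ -(m : ℂ))
    (x : Fin L → ℂ) (z : Fin M → ℂ)
    (hx0 : ∀ i, x i ≠ 0) (hz0 : ∀ k, z k ≠ 0)
    (hx : ∀ i j, i ≠ j → x i ^ 2 ≠ x j ^ 2)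
    (hz : ∀ i j, i ≠ j → z i ^ 2 ≠ z j ^ 2)
    (hxz : ∀ i k, (x i + η / 2) ^ 2 ≠ z k ^ 2 ∧ (x i - η / 2) ^ 2 ≠ z k ^ 2)
    (hzx : ∀ k i, (z k + η / 2) ^ 2 ≠ x i ^ 2 ∧ (z k - η / 2) ^ 2 ≠ x i ^ 2) :
    Afun η x (fFun η ξp ξm z)
      = (-1 : ℂ) ^ M * (2 * η) ^ ((L : ℤ) - (M : ℤ))
          * (Complex.Gamma ((ξp + ξm) / η + (L : ℂ) - (M : ℂ))
              / Complex.Gamma ((ξp + ξm) / η))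
          * Afun η z (fFun η (-ξp + η / 2) (-ξm + η / 2) x) := by
  have h : GenericNodes η x z := ⟨hx0, hz0, hx, hz, hxz, hzx⟩
  rw [Afun_eq_symSum η hx, Afun_eq_symSum η hz]
  rcases le_or_gt M L with hML | hLM
  · exact symSum_fFun_reciprocity_Gamma_of_le hML hη hs h
  · exact symSum_fFun_reciprocity_Gamma_of_lt hLM hη hs hs' h
end
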